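/- arXiv:math-ph/0505082 — 2 statements merged into one kernel-verified Lean document; each statement's English description precedes it below -/
import Mathlib

section
/- The matrix D(k̂) = [D_{mn}(k̂)] is positive semidefinite: for every ξ ∈ ℝ^d, Σ_{m,n=1}^d D_{mn}(k̂) ξ_m ξ_n ≥ 0. -/
set_option maxHeartbeats 1000000

open MeasureTheory Set Filter Topology intervalIntegral

lemma second_deriv_nonneg_of_min (Q Q1 Q2 : ℝ → ℝ)
    (hQ1 : ∀ x, HasDerivAt Q (Q1 x) x)
    (hQ2 : ∀ x, HasDerivAt Q1 (Q2 x) x)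
    (hQ2c : ContinuousAt Q2 0)
    (hQnn : ∀ x, 0 ≤ Q x) (hQ0 : Q 0 = 0) : 0 ≤ Q2 0 := by
  by_contra hneg
  push_neg at hneg
  -- Q1 0 = 0
  have hmin : IsLocalMin Q 0 := Filter.Eventually.of_forall (fun x => by rw [hQ0]; exact hQnn x)
  have hQ10 : Q1 0 = 0 := hmin.hasDerivAt_eq_zero (hQ1 0)
  -- Q2 < 0 near 0
  obtain ⟨a, ha, hball⟩ : ∃ a > 0, ∀ x, |x| < a → Q2 x < 0 := by
    have := Metric.continuousAt_iff.1 hQ2c (-(Q2 0) / 2) (by linarith)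
    obtain ⟨δ, hδ, h⟩ := this
    refine ⟨δ, hδ, fun x hx => ?_⟩
    have := h (by simpa [Real.dist_eq] using hx)
    rw [Real.dist_eq] at this
    cases' abs_lt.1 this with h1 h2
    linarith
  set b := a / 2 with hb
  have hb0 : 0 < b := by positivity
  have hQ1cont : Continuous Q1 := by
    refine continuous_iff_continuousAt.2 fun x => (hQ2 x).differentiableAt.continuousAt
  have hQcont : Continuous Q := by
    refine continuous_iff_continuousAt.2 fun x => (hQ1 x).differentiableAt.continuousAt
  have hanti1 : StrictAntiOn Q1 (Icc 0 b) := by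
    refine strictAntiOn_of_deriv_neg (convex_Icc _ _) hQ1cont.continuousOn fun x hx => ?_
    rw [interior_Icc] at hx
    rw [(hQ2 x).deriv]
    exact hball x (by rw [abs_lt]; constructor <;> [linarith [hx.1]; linarith [hx.2, hb0]])
  have hQ1neg : ∀ x ∈ Ioo (0:ℝ) b, Q1 x < 0 := by
    intro x hx
    have := hanti1 (left_mem_Icc.2 hb0.le) ⟨hx.1.le, hx.2.le⟩ hx.1
    rwa [hQ10] at this
  have hanti2 : StrictAntiOn Q (Icc 0 b) := by
    refine strictAntiOn_of_deriv_neg (convex_Icc _ _) hQcont.continuousOn fun x hx => ?_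
    rw [interior_Icc] at hx
    rw [(hQ1 x).deriv]
    exact hQ1neg x hx
  have : Q b < Q 0 := hanti2 (left_mem_Icc.2 hb0.le) (right_mem_Icc.2 hb0.le) hb0
  have := hQnn b
  linarith

lemma cesaro_integral (F : ℝ → ℝ) (hF : Continuous F) (L : ℝ)
    (hL : Tendsto F atTop (𝓝 L)) :
    Tendsto (fun T : ℝ => (∫ u in (0:ℝ)..T, F u) / T) atTop (𝓝 L) := by
  rw [Metric.tendsto_atTop]
  intro ε hε
  obtain ⟨M0, hM0⟩ := (Metric.tendsto_atTop.1 hL) (ε / 4) (by linarith)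
  set M := max M0 0 with hM
  have hM0' : ∀ u ≥ M, |F u - L| ≤ ε / 4 := fun u hu => by
    have := hM0 u (le_trans (le_max_left _ _) hu)
    rw [Real.dist_eq] at this; linarith
  have hMnn : 0 ≤ M := le_max_right _ _
  set C := |∫ u in (0:ℝ)..M, (F u - L)| with hC
  have hCnn : 0 ≤ C := abs_nonneg _
  refine ⟨max (max M 1) (4 * C / ε + 1), fun T hT => ?_⟩
  have hTM : M ≤ T := le_trans (le_trans (le_max_left _ _) (le_max_left _ _)) hT
  have hT1 : 1 ≤ T := le_trans (le_trans (le_max_right _ _) (le_max_left _ _)) hT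
  have hTC : 4 * C / ε + 1 ≤ T := le_trans (le_max_right _ _) hT
  have hT0 : 0 < T := by linarith
  have hFL : Continuous fun u => F u - L := hF.sub continuous_const
  have key : |∫ u in (0:ℝ)..T, (F u - L)| < ε * T := by
    have hsplit : (∫ u in (0:ℝ)..T, (F u - L)) =
        (∫ u in (0:ℝ)..M, (F u - L)) + ∫ u in M..T, (F u - L) :=
      (integral_add_adjacent_intervals (hFL.intervalIntegrable _ _)
        (hFL.intervalIntegrable _ _)).symm
    have h2 : |∫ u in M..T, (F u - L)| ≤ ε / 4 * |T - M| := by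
      rw [← Real.norm_eq_abs]
      apply intervalIntegral.norm_integral_le_of_norm_le_const
      intro x hx
      rw [uIoc_of_le hTM] at hx
      rw [Real.norm_eq_abs]
      exact hM0' x hx.1.le
    have h3 : ε / 4 * |T - M| ≤ ε / 4 * T := by
      rw [abs_of_nonneg (by linarith)]
      nlinarith
    have h4 : C < ε / 4 * T := by
      have : 4 * C / ε < T := by linarith
      rw [div_lt_iff₀ (by linarith)] at this
      nlinarith
    calc |∫ u in (0:ℝ)..T, (F u - L)| ≤ C + |∫ u in M..T, (F u - L)| := by
          rw [hsplit]; exact abs_add_le _ _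
      _ < ε / 4 * T + ε / 4 * T := by
          have := le_trans h2 h3; linarith
      _ ≤ ε * T := by nlinarith
  have heq : (∫ u in (0:ℝ)..T, F u) / T - L = (∫ u in (0:ℝ)..T, (F u - L)) / T := by
    rw [intervalIntegral.integral_sub (hF.intervalIntegrable _ _)
      (intervalIntegrable_const), intervalIntegral.integral_const]
    field_simp
    rw [sub_zero, smul_eq_mul]
  rw [Real.dist_eq, heq, abs_div, abs_of_pos hT0, div_lt_iff₀ hT0]
  exact key

lemma double_nonneg (f : ℝ → ℝ) (hc : Continuous f)
    (hpos : ∀ (N : ℕ) (s c : Fin N → ℝ), 0 ≤ ∑ i, ∑ j, c i * c j * f (s i - s j))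
    (T : ℝ) (hT : 0 < T) :
    0 ≤ ∫ t in (0:ℝ)..T, ((∫ u in (0:ℝ)..(T - t), f u) - ∫ u in (0:ℝ)..(-t), f u) := by
  set F : ℝ → ℝ := fun x => ∫ u in (0:ℝ)..x, f u with hFdef
  have hFc : Continuous F :=
    intervalIntegral.continuous_primitive (fun a b => hc.intervalIntegrable a b) 0
  set G : ℝ → ℝ := fun t => F (T - t) - F (-t) with hGdef
  have hGc : Continuous G := (hFc.comp (continuous_const.sub continuous_id)).sub
    (hFc.comp continuous_neg)
  show 0 ≤ ∫ t in (0:ℝ)..T, G t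
  -- it suffices to show `-ε ≤ I` for all positive ε
  suffices h : ∀ ε > 0, -ε ≤ ∫ t in (0:ℝ)..T, G t by
    by_contra h'
    push_neg at h'
    have := h (-(∫ t in (0:ℝ)..T, G t) / 2) (by linarith)
    linarith
  intro ε hε
  set ε' : ℝ := ε / (T * T) with hε'def
  have hε' : 0 < ε' := by positivity
  -- uniform continuity on the compact interval
  obtain ⟨δ₀, hδ₀, hunif⟩ : ∃ δ₀ > 0, ∀ x ∈ Icc (-(2*T)) (2*T), ∀ y ∈ Icc (-(2*T)) (2*T),
      dist x y ≤ δ₀ → dist (f x) (f y) ≤ ε' := by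
    have := (isCompact_Icc (a := -(2*T)) (b := 2*T)).uniformContinuousOn_of_continuous
      hc.continuousOn
    obtain ⟨δ₀, hδ₀, h⟩ := (Metric.uniformContinuousOn_iff_le.1 this) ε' hε'
    exact ⟨δ₀, hδ₀, fun x hx y hy hd => h x hx y hy hd⟩
  obtain ⟨N, hN⟩ := exists_nat_gt (T / δ₀)
  have hTδ₀ : 0 < T / δ₀ := by positivity
  have hN0' : (0:ℝ) < N := lt_trans hTδ₀ hN
  have hN0 : 0 < N := by exact_mod_cast hN0'
  have h1N : (1:ℝ) ≤ N := by exact_mod_cast hN0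
  set δ : ℝ := T / N with hδdef
  have hδ0 : 0 < δ := by positivity
  have hNδ : (N:ℝ) * δ = T := by
    rw [hδdef, mul_comm]
    exact div_mul_cancel₀ T (ne_of_gt hN0')
  have hδδ₀ : δ ≤ δ₀ := by
    rw [div_lt_iff₀ hδ₀] at hN
    rw [hδdef, div_le_iff₀ hN0']
    nlinarith
  have hδT : δ ≤ T := by
    rw [hδdef, div_le_iff₀ hN0']
    nlinarith
  set a : ℕ → ℝ := fun k => k * δ with hadef
  -- the Riemann sum is nonnegative
  have hS : 0 ≤ ∑ j ∈ Finset.range N, ∑ i ∈ Finset.range N, δ * δ * f (a i - a j) := by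
    have h0 := hpos N (fun i => (i:ℝ) * δ) (fun _ => δ)
    rw [Finset.sum_comm] at h0
    have heq : ∑ j ∈ Finset.range N, ∑ i ∈ Finset.range N, δ * δ * f (a i - a j)
        = ∑ j : Fin N, ∑ i : Fin N, δ * δ * f (a i - a j) := by
      rw [← Fin.sum_univ_eq_sum_range (fun j => ∑ i ∈ Finset.range N, δ * δ * f (a i - a j)) N]
      apply Finset.sum_congr rfl
      intro j _
      rw [← Fin.sum_univ_eq_sum_range (fun i => δ * δ * f (a i - a (j:ℕ))) N]
    rw [heq]
    simpa only [hadef] using h0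
  -- inner pointwise estimate
  have hinner : ∀ i < N, ∀ j < N, ∀ t ∈ Set.Ioc (a j) (a (j+1)),
      |F (a (i+1) - t) - F (a i - t) - δ * f (a i - a j)| ≤ ε' * δ := by
    intro i hi j hj t ht
    have hi' : (i:ℝ) + 1 ≤ N := by exact_mod_cast hi
    have hj' : (j:ℝ) + 1 ≤ N := by exact_mod_cast hj
    have hAB : a i - t ≤ a (i+1) - t := by
      simp only [hadef]; push_cast; nlinarith
    have hFF : F (a (i+1) - t) - F (a i - t) = ∫ u in (a i - t)..(a (i+1) - t), f u :=
      integral_interval_sub_left (hc.intervalIntegrable _ _) (hc.intervalIntegrable _ _)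
    have hwidth : (a (i+1) - t) - (a i - t) = δ := by
      simp only [hadef]; push_cast; ring
    have hconst : δ * f (a i - a j) = ∫ _u in (a i - t)..(a (i+1) - t), f (a i - a j) := by
      rw [intervalIntegral.integral_const, hwidth, smul_eq_mul]
    rw [hFF, hconst, ← intervalIntegral.integral_sub (hc.intervalIntegrable _ _)
      intervalIntegrable_const]
    rw [← Real.norm_eq_abs]
    refine le_trans (intervalIntegral.norm_integral_le_of_norm_le_const (C := ε') ?_)
      (le_of_eq (by rw [hwidth, abs_of_pos hδ0]))
    · intro u hu
      rw [Set.uIoc_of_le hAB] at hu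
      have hu1 := hu.1
      have hu2 := hu.2
      have ht1 := ht.1
      have ht2 := ht.2
      have haj : a (j+1) = (j:ℝ) * δ + δ := by simp only [hadef]; push_cast; ring
      have hai : a (i+1) = (i:ℝ) * δ + δ := by simp only [hadef]; push_cast; ring
      have hai0 : a i = (i:ℝ) * δ := by simp only [hadef]
      have haj0 : a j = (j:ℝ) * δ := by simp only [hadef]
      have hiδ : (0:ℝ) ≤ (i:ℝ) * δ := mul_nonneg (Nat.cast_nonneg i) hδ0.le
      have hjδ : (0:ℝ) ≤ (j:ℝ) * δ := mul_nonneg (Nat.cast_nonneg j) hδ0.le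
      have hiδT : ((i:ℝ) + 1) * δ ≤ T :=
        le_trans (mul_le_mul_of_nonneg_right hi' hδ0.le) (le_of_eq hNδ)
      have hjδT : ((j:ℝ) + 1) * δ ≤ T :=
        le_trans (mul_le_mul_of_nonneg_right hj' hδ0.le) (le_of_eq hNδ)
      rw [Real.norm_eq_abs, ← Real.dist_eq]
      apply hunif
      · constructor <;> nlinarith
      · constructor <;> nlinarith
      · rw [Real.dist_eq, abs_le]
        constructor <;> nlinarith
  -- outer estimate per cell
  have houter : ∀ i < N, ∀ j < N,
      |(∫ t in (a j)..(a (j+1)), (F (a (i+1) - t) - F (a i - t))) - δ * δ * f (a i - a j)|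
        ≤ ε' * δ * δ := by
    intro i hi j hj
    have hcellw : a (j+1) - a j = δ := by simp only [hadef]; push_cast; ring
    have hIcont : Continuous fun t => F (a (i+1) - t) - F (a i - t) :=
      (hFc.comp (continuous_const.sub continuous_id)).sub
        (hFc.comp (continuous_const.sub continuous_id))
    have hconst : δ * δ * f (a i - a j) = ∫ _t in (a j)..(a (j+1)), (δ * f (a i - a j)) := by
      rw [intervalIntegral.integral_const, hcellw, smul_eq_mul]; ring
    rw [hconst, ← intervalIntegral.integral_sub (hIcont.intervalIntegrable _ _)
      intervalIntegrable_const, ← Real.norm_eq_abs]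
    have hab : a j ≤ a (j+1) := by rw [← sub_nonneg, hcellw]; exact hδ0.le
    refine le_trans (intervalIntegral.norm_integral_le_of_norm_le_const (C := ε' * δ) ?_)
      (le_of_eq (by rw [hcellw, abs_of_pos hδ0]))
    · intro t ht
      rw [Set.uIoc_of_le hab] at ht
      rw [Real.norm_eq_abs]
      exact hinner i hi j hj t ht
  -- decompose the integral
  have ha0 : a 0 = 0 := by simp [hadef]
  have haN : a N = T := by simp only [hadef]; exact hNδ
  have hIdecomp : (∫ t in (0:ℝ)..T, G t) =
      ∑ j ∈ Finset.range N, ∫ t in (a j)..(a (j+1)), G t := by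
    rw [intervalIntegral.sum_integral_adjacent_intervals
      (fun k _ => hGc.intervalIntegrable _ _), ha0, haN]
  have hGsum : ∀ t, G t = ∑ i ∈ Finset.range N, (F (a (i+1) - t) - F (a i - t)) := by
    intro t
    rw [Finset.sum_range_sub (fun i => F (a i - t)), ha0, haN, zero_sub]
  have hcell : ∀ j, (∫ t in (a j)..(a (j+1)), G t) =
      ∑ i ∈ Finset.range N, ∫ t in (a j)..(a (j+1)), (F (a (i+1) - t) - F (a i - t)) := by
    intro j
    rw [← intervalIntegral.integral_finset_sum]
    · exact intervalIntegral.integral_congr (fun t _ => hGsum t)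
    · intro i _
      exact ((hFc.comp (continuous_const.sub continuous_id)).sub
        (hFc.comp (continuous_const.sub continuous_id))).intervalIntegrable _ _
  -- put everything together
  have hIS : |(∫ t in (0:ℝ)..T, G t) -
      ∑ j ∈ Finset.range N, ∑ i ∈ Finset.range N, δ * δ * f (a i - a j)| ≤ ε := by
    rw [hIdecomp]
    simp_rw [hcell]
    rw [← Finset.sum_sub_distrib]
    calc |∑ j ∈ Finset.range N, ((∑ i ∈ Finset.range N,
            ∫ t in (a j)..(a (j+1)), (F (a (i+1) - t) - F (a i - t))) -
            ∑ i ∈ Finset.range N, δ * δ * f (a i - a j))|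
        ≤ ∑ j ∈ Finset.range N, |(∑ i ∈ Finset.range N,
            ∫ t in (a j)..(a (j+1)), (F (a (i+1) - t) - F (a i - t))) -
            ∑ i ∈ Finset.range N, δ * δ * f (a i - a j)| := Finset.abs_sum_le_sum_abs _ _
      _ ≤ ∑ j ∈ Finset.range N, (ε' * δ * δ * N) := by
          apply Finset.sum_le_sum
          intro j hj
          rw [← Finset.sum_sub_distrib]
          calc |∑ i ∈ Finset.range N,
                ((∫ t in (a j)..(a (j+1)), (F (a (i+1) - t) - F (a i - t))) -
                  δ * δ * f (a i - a j))|
              ≤ ∑ i ∈ Finset.range N, |(∫ t in (a j)..(a (j+1)),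
                  (F (a (i+1) - t) - F (a i - t))) - δ * δ * f (a i - a j)| :=
                Finset.abs_sum_le_sum_abs _ _
            _ ≤ ∑ i ∈ Finset.range N, (ε' * δ * δ) := by
                apply Finset.sum_le_sum
                intro i hi
                exact houter i (Finset.mem_range.1 hi) j (Finset.mem_range.1 hj)
            _ = ε' * δ * δ * N := by
                rw [Finset.sum_const, Finset.card_range, nsmul_eq_mul]; ring
      _ = ε' * δ * δ * N * N := by
          rw [Finset.sum_const, Finset.card_range, nsmul_eq_mul]; ring
      _ = ε := by
          have hre : ε / (T * T) * δ * δ * (N:ℝ) * (N:ℝ)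
              = ε * (((N:ℝ) * δ) * ((N:ℝ) * δ)) / (T * T) := by ring
          rw [hε'def, hre, hNδ, mul_div_assoc, div_self (by positivity : T * T ≠ 0), mul_one]
  have h1 := abs_le.1 hIS
  linarith [hS, h1.1]

lemma posdef_integral_nonneg (f : ℝ → ℝ) (hc : Continuous f) (hi : Integrable f)
    (hpos : ∀ (N : ℕ) (s c : Fin N → ℝ), 0 ≤ ∑ i, ∑ j, c i * c j * f (s i - s j)) :
    0 ≤ ∫ s, f s := by
  set F : ℝ → ℝ := fun x => ∫ u in (0:ℝ)..x, f u with hFdef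
  have hFc : Continuous F :=
    intervalIntegral.continuous_primitive (fun a b => hc.intervalIntegrable a b) 0
  have hIoi : Tendsto F atTop (𝓝 (∫ x in Ioi (0:ℝ), f x)) :=
    intervalIntegral_tendsto_integral_Ioi 0 hi.integrableOn tendsto_id
  have hIic : Tendsto (fun u : ℝ => F (-u)) atTop (𝓝 (-(∫ x in Iic (0:ℝ), f x))) := by
    have h1 : Tendsto (fun T : ℝ => ∫ x in (-T)..0, f x) atTop (𝓝 (∫ x in Iic (0:ℝ), f x)) :=
      intervalIntegral_tendsto_integral_Iic 0 hi.integrableOn tendsto_neg_atTop_atBot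
    have h2 : ∀ T : ℝ, F (-T) = -(∫ x in (-T)..0, f x) := fun T =>
      intervalIntegral.integral_symm _ _
    simp_rw [h2]
    exact h1.neg
  have avg1 := cesaro_integral F hFc _ hIoi
  have avg2 := cesaro_integral (fun u => F (-u)) (hFc.comp continuous_neg) _ hIic
  have hlim : Tendsto (fun T : ℝ => (∫ u in (0:ℝ)..T, F u) / T
      - (∫ u in (0:ℝ)..T, F (-u)) / T) atTop (𝓝 (∫ x, f x)) := by
    have := avg1.sub avg2
    have heq : (∫ x in Ioi (0:ℝ), f x) - -(∫ x in Iic (0:ℝ), f x) = ∫ x, f x := by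
      rw [sub_neg_eq_add, add_comm]
      exact integral_Iic_add_Ioi hi.integrableOn hi.integrableOn
    rwa [heq] at this
  refine ge_of_tendsto hlim (eventually_atTop.2 ⟨1, fun T hT => ?_⟩)
  have hT0 : (0:ℝ) < T := by linarith
  rw [div_sub_div_same]
  apply div_nonneg _ hT0.le
  have hd := double_nonneg f hc hpos T hT0
  have hsub : (∫ t in (0:ℝ)..T, ((∫ u in (0:ℝ)..(T - t), f u) - ∫ u in (0:ℝ)..(-t), f u))
      = (∫ t in (0:ℝ)..T, F (T - t)) - ∫ t in (0:ℝ)..T, F (-t) := by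
    exact intervalIntegral.integral_sub
      ((hFc.comp (continuous_const.sub continuous_id)).intervalIntegrable _ _)
      ((hFc.comp continuous_neg).intervalIntegrable _ _)
  have hcomp : (∫ t in (0:ℝ)..T, F (T - t)) = ∫ u in (0:ℝ)..T, F u := by
    rw [intervalIntegral.integral_comp_sub_left F T, sub_self, sub_zero]
  rw [hsub, hcomp] at hd
  exact hd

section LineD

variable {E : Type*} [NormedAddCommGroup E] [NormedSpace ℝ E]

lemma lineD (φ : E → ℝ) (hφ : Differentiable ℝ φ) (y w : E) (ε : ℝ) :
    HasDerivAt (fun t : ℝ => φ (y + t • w)) (fderiv ℝ φ (y + ε • w) w) ε := by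
  have hline : HasDerivAt (fun t : ℝ => y + t • w) ((1:ℝ) • w) ε :=
    ((hasDerivAt_id ε).smul_const w).const_add y
  rw [one_smul] at hline
  exact (hφ (y + ε • w)).hasFDerivAt.comp_hasDerivAt ε hline

lemma lineD_neg (φ : E → ℝ) (hφ : Differentiable ℝ φ) (y w : E) (ε : ℝ) :
    HasDerivAt (fun t : ℝ => φ (y - t • w)) (-(fderiv ℝ φ (y - ε • w) w)) ε := by
  have := lineD φ hφ y (-w) ε
  simp only [smul_neg, ← sub_eq_add_neg, map_neg] at this
  exact this

lemma posdef_line (R : E → ℝ) (hR : ContDiff ℝ 2 R)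
    (hRpos : ∀ (N : ℕ) (x : Fin N → E) (c : Fin N → ℝ),
      0 ≤ ∑ i, ∑ j, c i * c j * R (x i - x j))
    (khat v : E) (N : ℕ) (s c : Fin N → ℝ) :
    0 ≤ ∑ i, ∑ j, c i * c j *
      (-(fderiv ℝ (fun y => fderiv ℝ R y v) ((s i - s j) • khat) v)) := by
  have hRd : Differentiable ℝ R := hR.differentiable (by norm_num)
  have hA1 : ContDiff ℝ 1 (fderiv ℝ R) := hR.fderiv_right (by norm_num)
  have hAd : Differentiable ℝ (fun y => fderiv ℝ R y v) :=
    (hA1.differentiable (by norm_num)).clm_apply (differentiable_const v)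
  have hAc1 : ContDiff ℝ 1 (fun y => fderiv ℝ R y v) := hA1.clm_apply contDiff_const
  have hBc : Continuous (fun y => fderiv ℝ (fun z => fderiv ℝ R z v) y v) :=
    (hAc1.continuous_fderiv_apply (by norm_num)).comp (continuous_id.prodMk continuous_const)
  set x : Fin N → E := fun i => s i • khat with hxdef
  set Q : ℝ → ℝ := fun ε => ∑ i, ∑ j, c i * c j *
    (2 * R (x i - x j) - R (x i - x j + ε • v) - R (x i - x j - ε • v)) with hQdef
  set Q1 : ℝ → ℝ := fun ε => ∑ i, ∑ j, c i * c j *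
    (fderiv ℝ R (x i - x j - ε • v) v - fderiv ℝ R (x i - x j + ε • v) v) with hQ1def
  set Q2 : ℝ → ℝ := fun ε => ∑ i, ∑ j, c i * c j *
    (-(fderiv ℝ (fun z => fderiv ℝ R z v) (x i - x j - ε • v) v)
      - fderiv ℝ (fun z => fderiv ℝ R z v) (x i - x j + ε • v) v) with hQ2def
  have hQ1' : ∀ ε, HasDerivAt Q (Q1 ε) ε := by
    intro ε
    simp only [hQdef, hQ1def]
    refine HasDerivAt.fun_sum fun i _ => HasDerivAt.fun_sum fun j _ => ?_
    have h1 : HasDerivAt (fun ε : ℝ => R (x i - x j + ε • v))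
        (fderiv ℝ R (x i - x j + ε • v) v) ε := lineD R hRd _ v ε
    have h2 : HasDerivAt (fun ε : ℝ => R (x i - x j - ε • v))
        (-(fderiv ℝ R (x i - x j - ε • v) v)) ε := lineD_neg R hRd _ v ε
    have h3 := (((hasDerivAt_const ε (2 * R (x i - x j))).fun_sub h1).fun_sub h2).const_mul (c i * c j)
    exact h3.congr_deriv (by ring)
  have hQ2' : ∀ ε, HasDerivAt Q1 (Q2 ε) ε := by
    intro ε
    simp only [hQ1def, hQ2def]
    refine HasDerivAt.fun_sum fun i _ => HasDerivAt.fun_sum fun j _ => ?_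
    have h1 : HasDerivAt (fun ε : ℝ => fderiv ℝ R (x i - x j - ε • v) v)
        (-(fderiv ℝ (fun z => fderiv ℝ R z v) (x i - x j - ε • v) v)) ε :=
      lineD_neg (fun z => fderiv ℝ R z v) hAd _ v ε
    have h2 : HasDerivAt (fun ε : ℝ => fderiv ℝ R (x i - x j + ε • v) v)
        (fderiv ℝ (fun z => fderiv ℝ R z v) (x i - x j + ε • v) v) ε :=
      lineD (fun z => fderiv ℝ R z v) hAd _ v ε
    have h3 := (h1.fun_sub h2).const_mul (c i * c j)
    convert h3 using 1
  have hQnn : ∀ ε, 0 ≤ Q ε := by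
    intro ε
    have h := hRpos (N + N) (Fin.append x (fun i => x i + ε • v)) (Fin.append c (fun i => -c i))
    simp only [Fin.sum_univ_add, Fin.append_left, Fin.append_right] at h
    refine le_trans h (le_of_eq ?_)
    simp only [hQdef]
    simp only [← Finset.sum_add_distrib]
    refine Finset.sum_congr rfl fun i _ => Finset.sum_congr rfl fun j _ => ?_
    have e1 : x i + ε • v - (x j + ε • v) = x i - x j := by abel
    have e2 : x i - (x j + ε • v) = x i - x j - ε • v := by abel
    have e3 : x i + ε • v - x j = x i - x j + ε • v := by abel
    rw [e1, e2, e3]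
    ring
  have hQ0 : Q 0 = 0 := by
    simp only [hQdef]
    refine Finset.sum_eq_zero fun i _ => Finset.sum_eq_zero fun j _ => ?_
    simp only [zero_smul, add_zero, sub_zero]
    ring
  have hQ2c : ContinuousAt Q2 0 := by
    have : Continuous Q2 := by
      simp only [hQ2def]
      refine continuous_finset_sum _ fun i _ => continuous_finset_sum _ fun j _ => ?_
      refine continuous_const.mul (Continuous.sub ?_ ?_)
      · exact (hBc.comp (continuous_const.sub (continuous_id.smul continuous_const))).neg
      · exact hBc.comp (continuous_const.add (continuous_id.smul continuous_const))
    exact this.continuousAt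
  have hkey := second_deriv_nonneg_of_min Q Q1 Q2 hQ1' hQ2' hQ2c hQnn hQ0
  have hQ20 : Q2 0 = 2 * (∑ i, ∑ j, c i * c j *
      (-(fderiv ℝ (fun y => fderiv ℝ R y v) ((s i - s j) • khat) v))) := by
    simp only [hQ2def]
    rw [Finset.mul_sum]
    refine Finset.sum_congr rfl fun i _ => ?_
    rw [Finset.mul_sum]
    refine Finset.sum_congr rfl fun j _ => ?_
    have e : x i - x j = (s i - s j) • khat := by rw [hxdef]; simp [sub_smul]
    simp only [zero_smul, sub_zero, add_zero, e]
    ring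
  linarith
end LineD

/-- the matrix `D(k̂)` with entries
`D_{mn}(k̂) = −(1/(2H0'(l))) ∫_ℝ ∂²R(s k̂)/∂x_n∂x_m ds` is positive semidefinite,
provided `R` is continuous, `C²`, of positive type, and the second derivatives along
the line `s ↦ s k̂` are integrable. -/
theorem stmt_6 (d : ℕ) (l : ℝ) (hl : 0 < l) (H0' : ℝ → ℝ) (hH0' : 0 < H0' l)
    (R : EuclideanSpace ℝ (Fin d) → ℝ) (hRcont : Continuous R) (hR : ContDiff ℝ 2 R)
    (hRpos : ∀ (N : ℕ) (x : Fin N → EuclideanSpace ℝ (Fin d)) (c : Fin N → ℝ),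
      0 ≤ ∑ i, ∑ j, c i * c j * R (x i - x j))
    (khat : EuclideanSpace ℝ (Fin d)) (hkhat : ‖khat‖ = 1)
    (hint : ∀ n m : Fin d, Integrable (fun s : ℝ =>
      fderiv ℝ (fun y => fderiv ℝ R y (EuclideanSpace.single n 1)) (s • khat)
        (EuclideanSpace.single m 1)))
    (ξ : Fin d → ℝ) :
    0 ≤ ∑ m : Fin d, ∑ n : Fin d,
      (-(1 / (2 * H0' l)) * ∫ s : ℝ,
        fderiv ℝ (fun y => fderiv ℝ R y (EuclideanSpace.single n 1)) (s • khat)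
          (EuclideanSpace.single m 1)) * ξ m * ξ n := by
  classical
  set v : EuclideanSpace ℝ (Fin d) := ∑ m : Fin d, ξ m • EuclideanSpace.single m 1 with hvdef
  have hA1 : ContDiff ℝ 1 (fderiv ℝ R) := hR.fderiv_right (by norm_num)
  have hAd : ∀ w : EuclideanSpace ℝ (Fin d), Differentiable ℝ (fun y => fderiv ℝ R y w) := fun w =>
    (hA1.differentiable (by norm_num)).clm_apply (differentiable_const w)
  -- bilinear expansion of the second derivative
  have hexpand : ∀ x : EuclideanSpace ℝ (Fin d), fderiv ℝ (fun y => fderiv ℝ R y v) x v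
      = ∑ m : Fin d, ∑ n : Fin d, ξ m * ξ n *
          fderiv ℝ (fun y => fderiv ℝ R y (EuclideanSpace.single n 1)) x
            (EuclideanSpace.single m 1) := by
    intro x
    have hfun : (fun y => fderiv ℝ R y v)
        = fun y => ∑ n : Fin d, ξ n * fderiv ℝ R y (EuclideanSpace.single n 1) := by
      funext y
      rw [hvdef, map_sum]
      exact Finset.sum_congr rfl fun n _ => by rw [_root_.map_smul]; rfl
    rw [hfun, fderiv_fun_sum (fun n _ => ((hAd (EuclideanSpace.single n 1)) x).const_mul (ξ n)),
      ContinuousLinearMap.sum_apply]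
    have hterm : ∀ n : Fin d,
        (fderiv ℝ (fun y => ξ n * fderiv ℝ R y (EuclideanSpace.single n 1)) x) v
        = ξ n * ∑ m : Fin d, ξ m *
            fderiv ℝ (fun y => fderiv ℝ R y (EuclideanSpace.single n 1)) x
              (EuclideanSpace.single m 1) := by
      intro n
      rw [fderiv_const_mul ((hAd (EuclideanSpace.single n 1)) x) (ξ n),
        ContinuousLinearMap.smul_apply, smul_eq_mul]
      congr 1
      rw [hvdef, map_sum]
      exact Finset.sum_congr rfl fun m _ => by rw [_root_.map_smul]; rfl
    rw [Finset.sum_congr rfl fun n _ => hterm n]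
    simp only [Finset.mul_sum]
    rw [Finset.sum_comm]
    exact Finset.sum_congr rfl fun m _ => Finset.sum_congr rfl fun n _ => by ring
  set f : ℝ → ℝ := fun t => -(fderiv ℝ (fun y => fderiv ℝ R y v) (t • khat) v) with hfdef
  have hfeq : f = fun t => -∑ m : Fin d, ∑ n : Fin d, ξ m * ξ n *
      fderiv ℝ (fun y => fderiv ℝ R y (EuclideanSpace.single n 1)) (t • khat)
        (EuclideanSpace.single m 1) := by
    funext t
    simp only [hfdef]
    rw [hexpand (t • khat)]
  have hAc1 : ContDiff ℝ 1 (fun y => fderiv ℝ R y v) := hA1.clm_apply contDiff_const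
  have hBc : Continuous (fun y => fderiv ℝ (fun z => fderiv ℝ R z v) y v) :=
    (hAc1.continuous_fderiv_apply (by norm_num)).comp (continuous_id.prodMk continuous_const)
  have hfc : Continuous f := by
    have : Continuous fun t : ℝ => -(fderiv ℝ (fun y => fderiv ℝ R y v) (t • khat) v) :=
      (hBc.comp (continuous_id.smul continuous_const)).neg
    exact this
  have hfi : Integrable f := by
    rw [hfeq]
    apply Integrable.neg
    exact integrable_finset_sum _ fun m _ => integrable_finset_sum _ fun n _ =>
      (hint n m).const_mul _
  have hfpos : ∀ (N : ℕ) (s c : Fin N → ℝ), 0 ≤ ∑ i, ∑ j, c i * c j * f (s i - s j) :=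
    fun N s c => posdef_line R hR hRpos khat v N s c
  have hI : 0 ≤ ∫ t, f t := posdef_integral_nonneg f hfc hfi hfpos
  have hIeq : ∫ t, f t = -∑ m : Fin d, ∑ n : Fin d, ξ m * ξ n *
      ∫ t : ℝ, fderiv ℝ (fun y => fderiv ℝ R y (EuclideanSpace.single n 1)) (t • khat)
        (EuclideanSpace.single m 1) := by
    rw [hfeq, MeasureTheory.integral_neg]
    congr 1
    rw [integral_finset_sum _ (fun m _ => integrable_finset_sum _ fun n _ =>
      (hint n m).const_mul _)]
    refine Finset.sum_congr rfl fun m _ => ?_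
    rw [integral_finset_sum _ (fun n _ => (hint n m).const_mul _)]
    exact Finset.sum_congr rfl fun n _ => MeasureTheory.integral_const_mul _ _
  calc (0:ℝ) ≤ (1 / (2 * H0' l)) * ∫ t, f t := mul_nonneg (by positivity) hI
    _ = ∑ m : Fin d, ∑ n : Fin d,
        (-(1 / (2 * H0' l)) * ∫ s : ℝ,
          fderiv ℝ (fun y => fderiv ℝ R y (EuclideanSpace.single n 1)) (s • khat)
            (EuclideanSpace.single m 1)) * ξ m * ξ n := by
      rw [hIeq, mul_neg, Finset.mul_sum, ← Finset.sum_neg_distrib]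
      refine Finset.sum_congr rfl fun m _ => ?_
      rw [Finset.mul_sum, ← Finset.sum_neg_distrib]
      exact Finset.sum_congr rfl fun n _ => by ring
end

section
/- Let d ≥ 2, j ∈ {1,…,d}, and let a, c : (0,∞) → ℝ be of class C¹. Define, on ℝ^d∖{0}, f(k) := a(|k|)·k_j/|k| and F_m(k) := c(|k|)·Σ_{n=1}^d (δ_{mn} − k_m k_n/|k|²) ∂f/∂k_n (k). Then Σ_{m=1}^d ∂F_m/∂k_m (k) = −(d−1)·c(|k|)·a(|k|)·k_j/|k|³ for every k ≠ 0. (Equivalently: Σ_{m,n} ∂_{k_m}( c(|k|)(δ_{mn} − k̂_m k̂_n) ∂_{k_n} f ) = −(d−1) c(|k|) a(|k|) k̂_j/|k|².) -/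
open MeasureTheory


open EuclideanSpace

variable {d : ℕ}

lemma norm_hasFDerivAt {k : EuclideanSpace ℝ (Fin d)} (hk : k ≠ 0) :
    HasFDerivAt (fun x : EuclideanSpace ℝ (Fin d) => ‖x‖) (‖k‖⁻¹ • innerSL ℝ k) k := by
  have hr : (0:ℝ) < ‖k‖ := norm_pos_iff.mpr hk
  have h0 : (‖k‖ ^ 2 : ℝ) ≠ 0 := by positivity
  have h1 : HasFDerivAt (fun x : EuclideanSpace ℝ (Fin d) => ‖x‖ ^ 2) (2 • innerSL ℝ k) k :=
    (hasStrictFDerivAt_norm_sq k).hasFDerivAt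
  have h2 := h1.sqrt h0
  have heq : (fun y : EuclideanSpace ℝ (Fin d) => Real.sqrt (‖y‖ ^ 2)) = fun y => ‖y‖ := by
    funext y; exact Real.sqrt_sq (norm_nonneg y)
  rw [heq] at h2
  have hL : (1 / (2 * Real.sqrt (‖k‖ ^ 2))) • (2 • innerSL ℝ k) = ‖k‖⁻¹ • innerSL ℝ k := by
    ext v
    simp [Real.sqrt_sq hr.le]
    ring
  rwa [hL] at h2

lemma aux1 (j n : Fin d) (a : ℝ → ℝ) (ha : ContDiffOn ℝ 1 a (Set.Ioi 0))
    {k : EuclideanSpace ℝ (Fin d)} (hk : k ≠ 0) :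
    fderiv ℝ (fun x : EuclideanSpace ℝ (Fin d) => a ‖x‖ * (x j / ‖x‖)) k
      (EuclideanSpace.single n 1) =
    deriv a ‖k‖ * (k n * k j) / ‖k‖ ^ 2 + a ‖k‖ * (if n = j then 1 else 0) / ‖k‖
      - a ‖k‖ * k j * k n / ‖k‖ ^ 3 := by
  have hr : (0:ℝ) < ‖k‖ := norm_pos_iff.mpr hk
  have hN := norm_hasFDerivAt hk
  have hda : HasDerivAt a (deriv a ‖k‖) ‖k‖ :=
    (((ha.differentiableOn one_ne_zero).differentiableAt (isOpen_Ioi.mem_nhds hr)).hasDerivAt)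
  have hA : HasFDerivAt (fun x : EuclideanSpace ℝ (Fin d) => a ‖x‖)
      (deriv a ‖k‖ • (‖k‖⁻¹ • innerSL ℝ k)) k := hda.comp_hasFDerivAt k hN
  have hcoord : HasFDerivAt (fun x : EuclideanSpace ℝ (Fin d) => x j)
      (EuclideanSpace.proj j : EuclideanSpace ℝ (Fin d) →L[ℝ] ℝ) k := by
      exact (EuclideanSpace.proj j : EuclideanSpace ℝ (Fin d) →L[ℝ] ℝ).hasFDerivAt
  have hinv : HasFDerivAt (fun x : EuclideanSpace ℝ (Fin d) => ‖x‖⁻¹)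
      ((-(‖k‖ ^ 2)⁻¹) • (‖k‖⁻¹ • innerSL ℝ k)) k :=
    (hasDerivAt_inv hr.ne').comp_hasFDerivAt k hN
  have hq := hcoord.mul hinv
  have hfull := hA.mul hq
  have hfun : (fun x : EuclideanSpace ℝ (Fin d) => a ‖x‖ * (x j / ‖x‖)) =
      fun x => a ‖x‖ * (x j * ‖x‖⁻¹) := by
    funext x; rw [div_eq_mul_inv]
  rw [hfun]; erw [hfull.fderiv]
  simp [real_inner_comm k, EuclideanSpace.inner_single_left, EuclideanSpace.inner_single_right, EuclideanSpace.single_apply]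
  rcases eq_or_ne n j with h | h
  · simp only [h, if_pos rfl, eq_self_iff_true, ↓reduceIte]; field_simp; ring
  · simp only [h, if_neg h, if_neg h.symm, ↓reduceIte]; field_simp; ring

lemma aux2 (j : Fin d) (a c : ℝ → ℝ) (ha : ContDiffOn ℝ 1 a (Set.Ioi 0))
    (hc : ContDiffOn ℝ 1 c (Set.Ioi 0))
    {k : EuclideanSpace ℝ (Fin d)} (hk : k ≠ 0) :
    ∃ q : ℝ, ∀ m : Fin d,
      fderiv ℝ (fun x : EuclideanSpace ℝ (Fin d) =>
          c ‖x‖ * a ‖x‖ / ‖x‖ * ((if m = j then (1:ℝ) else 0) - x m * x j / ‖x‖ ^ 2)) k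
        (EuclideanSpace.single m 1) =
      q * k m * ((if m = j then (1:ℝ) else 0) - k m * k j / ‖k‖ ^ 2)
        + (c ‖k‖ * a ‖k‖ / ‖k‖) *
          (2 * k m ^ 2 * k j / ‖k‖ ^ 4 - (k j + (if m = j then (1:ℝ) else 0) * k m) / ‖k‖ ^ 2) := by
  have hr : (0:ℝ) < ‖k‖ := norm_pos_iff.mpr hk
  have h0 : (‖k‖ ^ 2 : ℝ) ≠ 0 := by positivity
  have hN := norm_hasFDerivAt hk
  have hda : HasDerivAt a (deriv a ‖k‖) ‖k‖ :=
    ((ha.differentiableOn one_ne_zero).differentiableAt (isOpen_Ioi.mem_nhds hr)).hasDerivAt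
  have hdc : HasDerivAt c (deriv c ‖k‖) ‖k‖ :=
    ((hc.differentiableOn one_ne_zero).differentiableAt (isOpen_Ioi.mem_nhds hr)).hasDerivAt
  have hP0 : HasDerivAt (fun t : ℝ => c t * a t / t)
      (((deriv c ‖k‖ * a ‖k‖ + c ‖k‖ * deriv a ‖k‖) * ‖k‖ - c ‖k‖ * a ‖k‖ * 1) / ‖k‖ ^ 2) ‖k‖ :=
    (hdc.mul hda).div (hasDerivAt_id' ‖k‖) hr.ne'
  set p' : ℝ := ((deriv c ‖k‖ * a ‖k‖ + c ‖k‖ * deriv a ‖k‖) * ‖k‖ - c ‖k‖ * a ‖k‖ * 1) / ‖k‖ ^ 2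
    with hp'
  refine ⟨p' / ‖k‖, fun m => ?_⟩
  have hPN : HasFDerivAt (fun x : EuclideanSpace ℝ (Fin d) => c ‖x‖ * a ‖x‖ / ‖x‖)
      (p' • (‖k‖⁻¹ • innerSL ℝ k)) k := hP0.comp_hasFDerivAt k hN
  have hcm : HasFDerivAt (fun x : EuclideanSpace ℝ (Fin d) => x m)
      (EuclideanSpace.proj m : EuclideanSpace ℝ (Fin d) →L[ℝ] ℝ) k := by
    exact (EuclideanSpace.proj m : EuclideanSpace ℝ (Fin d) →L[ℝ] ℝ).hasFDerivAt
  have hcj : HasFDerivAt (fun x : EuclideanSpace ℝ (Fin d) => x j)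
      (EuclideanSpace.proj j : EuclideanSpace ℝ (Fin d) →L[ℝ] ℝ) k := by
    exact (EuclideanSpace.proj j : EuclideanSpace ℝ (Fin d) →L[ℝ] ℝ).hasFDerivAt
  have hnormsq : HasFDerivAt (fun x : EuclideanSpace ℝ (Fin d) => ‖x‖ ^ 2)
      (2 • innerSL ℝ k) k := (hasStrictFDerivAt_norm_sq k).hasFDerivAt
  have hn2 : HasFDerivAt (fun x : EuclideanSpace ℝ (Fin d) => (‖x‖ ^ 2)⁻¹)
      ((-((‖k‖ ^ 2) ^ 2)⁻¹) • (2 • innerSL ℝ k)) k :=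
    (hasDerivAt_inv h0).comp_hasFDerivAt k hnormsq
  have hQ := (hasFDerivAt_const (if m = j then (1:ℝ) else 0) k).sub ((hcm.mul hcj).mul hn2)
  have hG := hPN.mul hQ
  have hfun : (fun x : EuclideanSpace ℝ (Fin d) =>
      c ‖x‖ * a ‖x‖ / ‖x‖ * ((if m = j then (1:ℝ) else 0) - x m * x j / ‖x‖ ^ 2)) =
      fun x => c ‖x‖ * a ‖x‖ / ‖x‖ * ((if m = j then (1:ℝ) else 0) - x m * x j * (‖x‖ ^ 2)⁻¹) := by
    funext x; rw [div_eq_mul_inv (x m * x j)]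
  rw [hfun]; erw [hG.fderiv]
  simp [real_inner_comm k, EuclideanSpace.inner_single_left, EuclideanSpace.inner_single_right, EuclideanSpace.single_apply]
  rcases eq_or_ne m j with h | h
  · simp only [h, if_pos rfl, eq_self_iff_true, ↓reduceIte]; field_simp; ring
  · simp only [h, if_neg h, if_neg (Ne.symm h), ↓reduceIte]; field_simp; ring

lemma sum_sq_eq (k : EuclideanSpace ℝ (Fin d)) : ∑ n : Fin d, k n ^ 2 = ‖k‖ ^ 2 := by
  rw [← real_inner_self_eq_norm_sq]
  simp [PiLp.inner_apply, sq]
  rw [← sq ‖k‖, EuclideanSpace.norm_sq_eq]; congr 1; funext i; rw [Real.norm_eq_abs, sq_abs, sq]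

set_option maxHeartbeats 1000000 in
lemma aux3 (j m : Fin d) (a c : ℝ → ℝ) {k : EuclideanSpace ℝ (Fin d)} (hk : k ≠ 0) :
    c ‖k‖ * ∑ n : Fin d, ((if m = n then (1:ℝ) else 0) - k m * k n / ‖k‖ ^ 2) *
      (deriv a ‖k‖ * (k n * k j) / ‖k‖ ^ 2 + a ‖k‖ * (if n = j then (1:ℝ) else 0) / ‖k‖
        - a ‖k‖ * k j * k n / ‖k‖ ^ 3)
    = c ‖k‖ * a ‖k‖ / ‖k‖ * ((if m = j then (1:ℝ) else 0) - k m * k j / ‖k‖ ^ 2) := by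
  have hr : (0:ℝ) < ‖k‖ := norm_pos_iff.mpr hk
  set r := ‖k‖ with hrdef
  have hstep : ∀ n : Fin d,
      ((if m = n then (1:ℝ) else 0) - k m * k n / r ^ 2) *
        (deriv a r * (k n * k j) / r ^ 2 + a r * (if n = j then (1:ℝ) else 0) / r
          - a r * k j * k n / r ^ 3)
      = (if m = n then (deriv a r * (k n * k j) / r ^ 2
            + a r * (if n = j then (1:ℝ) else 0) / r - a r * k j * k n / r ^ 3) else 0)
        - ((k m / r ^ 2 * (deriv a r * k j / r ^ 2 - a r * k j / r ^ 3)) * (k n ^ 2)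
            + (if n = j then (k m / r ^ 2) * (a r / r) * k n else 0)) := by
    intro n
    rcases eq_or_ne m n with h | h
    · subst h
      rcases eq_or_ne m j with h2 | h2
      · subst h2; simp only [if_pos rfl, eq_self_iff_true, ↓reduceIte]; field_simp; ring
      · simp only [if_pos rfl, if_neg h2, eq_self_iff_true, ↓reduceIte]; field_simp; ring
    · rcases eq_or_ne n j with h2 | h2
      · subst h2; simp only [if_neg h, if_pos rfl, eq_self_iff_true, ↓reduceIte]; field_simp; ring
      · simp only [if_neg h, if_neg h2]; field_simp; ring
  calc c r * ∑ n : Fin d, ((if m = n then (1:ℝ) else 0) - k m * k n / r ^ 2) *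
      (deriv a r * (k n * k j) / r ^ 2 + a r * (if n = j then (1:ℝ) else 0) / r
        - a r * k j * k n / r ^ 3)
      = c r * ((deriv a r * (k m * k j) / r ^ 2
            + a r * (if m = j then (1:ℝ) else 0) / r - a r * k j * k m / r ^ 3)
        - ((k m / r ^ 2 * (deriv a r * k j / r ^ 2 - a r * k j / r ^ 3)) * r ^ 2
            + (k m / r ^ 2) * (a r / r) * k j)) := by
        rw [Finset.sum_congr rfl (fun n _ => hstep n)]
        rw [Finset.sum_sub_distrib, Finset.sum_ite_eq, Finset.sum_add_distrib,
          ← Finset.mul_sum, sum_sq_eq, Finset.sum_ite_eq']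
        simp [← hrdef]
    _ = c r * a r / r * ((if m = j then (1:ℝ) else 0) - k m * k j / r ^ 2) := by
        rcases eq_or_ne m j with h | h
        · subst h; simp only [if_pos rfl]; field_simp; ring
        · simp only [if_neg h]; field_simp; ring

set_option maxHeartbeats 1000000

/-- for `f(k) = a(|k|) k_j/|k|` and
`F_m(k) = c(|k|) Σ_n (δ_{mn} − k_m k_n/|k|²) ∂f/∂k_n(k)`,
one has `Σ_m ∂F_m/∂k_m (k) = −(d−1) c(|k|) a(|k|) k_j/|k|³` for all `k ≠ 0`. -/
theorem stmt_9 (d : ℕ) (hd : 2 ≤ d) (j : Fin d) (a c : ℝ → ℝ)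
    (ha : ContDiffOn ℝ 1 a (Set.Ioi 0)) (hc : ContDiffOn ℝ 1 c (Set.Ioi 0))
    (f : EuclideanSpace ℝ (Fin d) → ℝ)
    (hf : ∀ k, f k = a ‖k‖ * (k j / ‖k‖))
    (F : Fin d → EuclideanSpace ℝ (Fin d) → ℝ)
    (hF : ∀ (m : Fin d) (k : EuclideanSpace ℝ (Fin d)),
      F m k = c ‖k‖ * ∑ n : Fin d, ((if m = n then (1:ℝ) else 0) - k m * k n / ‖k‖ ^ 2) *
        fderiv ℝ f k (EuclideanSpace.single n 1)) :
    ∀ k : EuclideanSpace ℝ (Fin d), k ≠ 0 →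
      ∑ m : Fin d, fderiv ℝ (F m) k (EuclideanSpace.single m 1) =
        -((d : ℝ) - 1) * c ‖k‖ * a ‖k‖ * k j / ‖k‖ ^ 3 := by
  intro k hk
  have hr : (0:ℝ) < ‖k‖ := norm_pos_iff.mpr hk
  have hfeq : f = fun x : EuclideanSpace ℝ (Fin d) => a ‖x‖ * (x j / ‖x‖) := funext hf
  have hne : ∀ᶠ x in nhds k, x ≠ 0 := eventually_ne_nhds hk
  have key : ∀ m : Fin d, fderiv ℝ (F m) k (EuclideanSpace.single m 1) =
      fderiv ℝ (fun x : EuclideanSpace ℝ (Fin d) =>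
        c ‖x‖ * a ‖x‖ / ‖x‖ * ((if m = j then (1:ℝ) else 0) - x m * x j / ‖x‖ ^ 2)) k
        (EuclideanSpace.single m 1) := by
    intro m
    have hev : F m =ᶠ[nhds k] (fun x : EuclideanSpace ℝ (Fin d) =>
        c ‖x‖ * a ‖x‖ / ‖x‖ * ((if m = j then (1:ℝ) else 0) - x m * x j / ‖x‖ ^ 2)) := by
      filter_upwards [hne] with x hx
      have h2 : F m x = c ‖x‖ * ∑ n : Fin d,
          ((if m = n then (1:ℝ) else 0) - x m * x n / ‖x‖ ^ 2) *
          (deriv a ‖x‖ * (x n * x j) / ‖x‖ ^ 2 + a ‖x‖ * (if n = j then (1:ℝ) else 0) / ‖x‖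
            - a ‖x‖ * x j * x n / ‖x‖ ^ 3) := by
        rw [hF m x, hfeq]
        congr 1
        exact Finset.sum_congr rfl fun n _ => by rw [aux1 j n a ha hx]
      exact h2.trans (aux3 j m a c hx)
    rw [hev.fderiv_eq]
  rw [Finset.sum_congr rfl (fun m _ => key m)]
  obtain ⟨q, hq⟩ := aux2 j a c ha hc hk
  rw [Finset.sum_congr rfl (fun m _ => hq m)]
  set r := ‖k‖ with hrdef
  set P : ℝ := c r * a r / r with hP
  have hstep : ∀ m : Fin d,
      q * k m * ((if m = j then (1:ℝ) else 0) - k m * k j / r ^ 2)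
        + P * (2 * k m ^ 2 * k j / r ^ 4 - (k j + (if m = j then (1:ℝ) else 0) * k m) / r ^ 2)
      = (if m = j then (q * k m - P * k m / r ^ 2) else 0)
        + k m ^ 2 * (2 * P * k j / r ^ 4 - q * k j / r ^ 2) + (-(P * k j / r ^ 2)) := by
    intro m
    rcases eq_or_ne m j with h | h
    · subst h; simp only [eq_self_iff_true, if_true]; ring
    · simp only [if_neg h]; ring
  rw [Finset.sum_congr rfl (fun m _ => hstep m)]
  rw [Finset.sum_add_distrib, Finset.sum_add_distrib, Finset.sum_ite_eq',
    ← Finset.sum_mul, sum_sq_eq, Finset.sum_const, Finset.card_univ, Fintype.card_fin]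
  simp only [Finset.mem_univ, if_pos, nsmul_eq_mul, hP]
  field_simp
  ring
end
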